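/- Jacobi's triple product identity (formal form): in the ring of formal power series in q with coefficients in the ring of Laurent polynomials ℤ[z, z^{-1}], one has the identity ∑_{m ∈ ℤ} (-1)^m q^{m(m-1)/2} z^m = ∏_{n=1}^{∞} (1 - q^n)(1 - q^n z^{-1})(1 - q^{n-1} z). Both sides are well defined: for each fixed power of q only finitely many integers m satisfy m(m-1)/2 equal to that power, and the infinite product converges in the (q)-adic topology on the formal power series ring. -/

import Mathlib

/-!
Truncating the product after `M` factors, and writing `x = -z`, leads to the finite identity
`∏_{i<a} (1 + x⁻¹ q^(i+1)) ∏_{j<b} (1 + x q^j) = ∑_{m=-a}^{b} [a+b, a+m]_q q^(m(m-1)/2) x^m`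
with Gaussian binomial coefficients `[n, k]_q`; multiplying out one more factor on either side is
one of the two `q`-Pascal rules. For `a = b = M` the extra factor `(q; q)_M` of the triple product
turns `[2M, M+m]_q` into a power series congruent to `1` modulo `q^(M-|m|+1)`, and since
`|m| ≤ m(m-1)/2 + 1` this error does not reach the coefficient of `q^N` once `M ≥ N + 1`.
-/

open Finset PowerSeries LaurentPolynomial

section QBinomial

variable {A : Type*} [CommSemiring A] (q : A)

/-- The Gaussian binomial coefficient `[n, k]_q`, with `k : ℤ` so that both `q`-Pascal rules hold
for every `k` without boundary cases. -/
def qBinom : ℕ → ℤ → A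
  | 0, k => if k = 0 then 1 else 0
  | n + 1, k => q ^ k.toNat * qBinom n k + qBinom n (k - 1)

theorem qBinom_succ (n : ℕ) (k : ℤ) :
    qBinom q (n + 1) k = q ^ k.toNat * qBinom q n k + qBinom q n (k - 1) := rfl

theorem qBinom_eq_zero {n : ℕ} {k : ℤ} (hk : k < 0 ∨ n < k) : qBinom q n k = 0 := by
  induction n generalizing k with
  | zero => simp only [qBinom]; rw [if_neg (by omega)]
  | succ n ih => rw [qBinom_succ, ih (by omega), ih (by omega), mul_zero, add_zero]

theorem qBinom_zero_right (n : ℕ) : qBinom q n 0 = 1 := by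
  induction n with
  | zero => rfl
  | succ n ih => rw [qBinom_succ, ih, qBinom_eq_zero q (by omega)]; simp

theorem pow_mul_qBinom_congr {n : ℕ} {k : ℤ} {e e' : ℕ} (h : 0 ≤ k → k ≤ n → e = e') :
    q ^ e * qBinom q n k = q ^ e' * qBinom q n k := by
  by_cases hk : 0 ≤ k ∧ k ≤ n
  · rw [h hk.1 hk.2]
  · rw [qBinom_eq_zero q (by omega), mul_zero, mul_zero]

theorem qBinom_succ' (n : ℕ) (k : ℤ) :
    qBinom q (n + 1) k = qBinom q n k + q ^ (n + 1 - k).toNat * qBinom q n (k - 1) := by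
  induction n generalizing k with
  | zero =>
    simp only [qBinom]
    rcases eq_or_ne k 0 with rfl | h0
    · simp
    rcases eq_or_ne k 1 with rfl | h1
    · simp
    · simp [h0, h1, sub_eq_zero]
  | succ n ih =>
    have hexp := pow_mul_qBinom_congr q (n := n) (k := k - 1)
      (e := k.toNat + (n + 1 - k).toNat) (e' := (n + 1 + 1 - k).toNat + (k - 1).toNat) (by omega)
    rw [pow_add, pow_add, mul_assoc, mul_assoc] at hexp
    conv_lhs => rw [qBinom_succ, ih k, ih (k - 1)]
    conv_rhs => rw [qBinom_succ q n k, qBinom_succ q n (k - 1)]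
    rw [show (n : ℤ) + 1 - (k - 1) = n + 1 + 1 - k by ring]
    push_cast
    rw [mul_add, hexp]
    ring

theorem qBinom_symm (n : ℕ) (k : ℤ) : qBinom q n (n - k) = qBinom q n k := by
  induction n generalizing k with
  | zero => simp [qBinom]
  | succ n ih =>
    rw [qBinom_succ', qBinom_succ, ← ih k, ← ih (k - 1)]
    push_cast
    rw [show (n : ℤ) + 1 - (n + 1 - k) = k by ring, show (n : ℤ) + 1 - k - 1 = n - k by ring,
      show (n : ℤ) - (k - 1) = n + 1 - k by ring]
    ring

theorem qBinom_self (n : ℕ) : qBinom q n n = 1 := by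
  rw [← qBinom_symm, sub_self, qBinom_zero_right]

end QBinomial

section QPochhammer

variable {A : Type*} [CommRing A] (q : A)

/-- `(q; q)_n`. -/
def qPochhammer (n : ℕ) : A := ∏ i ∈ range n, (1 - q ^ (i + 1))

theorem qPochhammer_mul_qBinom (a b : ℕ) :
    qPochhammer q b * qBinom q (a + b) a = ∏ i ∈ range b, (1 - q ^ (a + i + 1)) := by
  induction a generalizing b with
  | zero => simp [qPochhammer, qBinom_zero_right]
  | succ a iha =>
    induction b with
    | zero => simpa [qPochhammer] using qBinom_self q (a + 1)
    | succ b ihb =>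
      have pascal : qBinom q (a + 1 + (b + 1)) (a + 1 : ℕ)
          = q ^ (a + 1) * qBinom q (a + 1 + b) (a + 1 : ℕ) + qBinom q (a + (b + 1)) a := by
        rw [show a + 1 + (b + 1) = a + 1 + b + 1 by ring, qBinom_succ,
          show a + 1 + b = a + (b + 1) by ring]
        simp
      rw [pascal, mul_add, ← mul_assoc, iha, qPochhammer, prod_range_succ, ← qPochhammer]
      calc _ = q ^ (a + 1) * (1 - q ^ (b + 1))
              * (qPochhammer q b * qBinom q (a + 1 + b) (a + 1 : ℕ))
            + ∏ i ∈ range (b + 1), (1 - q ^ (a + i + 1)) := by ring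
        _ = _ := by
          rw [ihb, prod_range_succ' (fun i => 1 - q ^ (a + i + 1)),
            prod_range_succ (fun i => 1 - q ^ (a + 1 + i + 1))]
          simp only [add_assoc, add_zero, add_comm 1]
          ring

theorem dvd_mul_sub_one {x y d : A} (hx : d ∣ x - 1) (hy : d ∣ y - 1) : d ∣ x * y - 1 := by
  rw [show x * y - 1 = x * (y - 1) + (x - 1) by ring]
  exact dvd_add (dvd_mul_of_dvd_right hy x) hx

theorem dvd_prod_sub_one {ι : Type*} {s : Finset ι} {f : ι → A} {d : A}
    (h : ∀ i ∈ s, d ∣ f i - 1) : d ∣ ∏ i ∈ s, f i - 1 :=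
  prod_induction f (fun x => d ∣ x - 1) (fun _ _ => dvd_mul_sub_one) (by simp) h

theorem pow_dvd_qPochhammer_mul_qBinom_sub_one {a b M : ℕ} (hba : b ≤ a) (hbM : b ≤ M) :
    q ^ (b + 1) ∣ qPochhammer q M * qBinom q (a + b) a - 1 := by
  have pow_dvd {e : ℕ} (he : b + 1 ≤ e) : q ^ (b + 1) ∣ (1 - q ^ e) - 1 := by
    simpa using pow_dvd_pow q he
  rw [qPochhammer, ← prod_range_mul_prod_Ico _ hbM, mul_right_comm, ← qPochhammer,
    qPochhammer_mul_qBinom]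
  refine dvd_mul_sub_one (dvd_prod_sub_one fun i _ => pow_dvd ?_)
    (dvd_prod_sub_one fun i hi => pow_dvd ?_)
  · omega
  · simp only [mem_Ico] at hi; omega

theorem pow_dvd_qPochhammer_mul_qBinom_add_self_sub_one {M : ℕ} {m : ℤ} (hm : m.natAbs ≤ M) :
    q ^ (M - m.natAbs + 1) ∣ qPochhammer q M * qBinom q (M + M) (M + m) - 1 := by
  have hG : qBinom q (M + M) (M + m)
      = qBinom q ((M + m.natAbs) + (M - m.natAbs)) (M + m.natAbs : ℕ) := by
    rw [show M + m.natAbs + (M - m.natAbs) = M + M by omega]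
    rcases le_total 0 m with h | h
    · congr 1; omega
    · rw [← qBinom_symm]; congr 1; push_cast [abs_of_nonpos h]; ring
  rw [hG]
  exact pow_dvd_qPochhammer_mul_qBinom_sub_one q (by omega) (by omega)

end QPochhammer

def triangle (m : ℤ) : ℕ := (m * (m - 1) / 2).toNat

theorem natCast_triangle (m : ℤ) : (triangle m : ℤ) = m * (m - 1) / 2 := by
  have : 0 ≤ m * (m - 1) := by rcases le_or_gt m 0 with h | h <;> nlinarith
  exact Int.toNat_of_nonneg (Int.ediv_nonneg this (by norm_num))

theorem two_mul_triangle (m : ℤ) : 2 * (triangle m : ℤ) = m * (m - 1) := by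
  rw [natCast_triangle, Int.mul_ediv_cancel' (Int.even_mul_pred_self m).two_dvd]

theorem triangle_add_one (m : ℤ) : (triangle (m + 1) : ℤ) = triangle m + m := by
  linarith [two_mul_triangle m, two_mul_triangle (m + 1)]

theorem natAbs_le_triangle_add_one (m : ℤ) : m.natAbs ≤ triangle m + 1 := by
  have h := two_mul_triangle m
  zify
  rcases le_total 0 m with hm | hm
  · rw [abs_of_nonneg hm]; nlinarith
  · rw [abs_of_nonpos hm]; nlinarith

section FiniteJacobiTripleProduct

variable {A : Type*} [CommRing A] (q : A) (x : Aˣ)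

noncomputable def tripleProductSum (a b : ℕ) : A :=
  ∑ m ∈ Icc (-(a : ℤ)) b, qBinom q (a + b) (a + m) * q ^ triangle m * ↑(x ^ m)

theorem sum_Icc_mul_zpow (f : ℤ → A) (lo hi d : ℤ) :
    (∑ m ∈ Icc lo hi, f m * ↑(x ^ m)) * ↑(x ^ d)
      = ∑ m ∈ Icc (lo + d) (hi + d), f (m - d) * ↑(x ^ m) := by
  rw [sum_mul, ← map_add_right_Icc, sum_map]
  refine sum_congr rfl fun m _ => ?_
  simp [zpow_add, mul_assoc]

theorem tripleProductSum_succ_right (a b : ℕ) :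
    tripleProductSum q x a (b + 1) = tripleProductSum q x a b * (1 + ↑x * q ^ b) := by
  have shift : tripleProductSum q x a b * ↑x = ∑ m ∈ Icc (-(a : ℤ) + 1) (b + 1),
      qBinom q (a + b) (a + (m - 1)) * q ^ triangle (m - 1) * ↑(x ^ m) := by
    rw [tripleProductSum]
    simpa using sum_Icc_mul_zpow x (fun m => qBinom q (a + b) (a + m) * q ^ triangle m) _ _ 1
  calc tripleProductSum q x a (b + 1)
    _ = (∑ m ∈ Icc (-(a : ℤ)) (b + 1), qBinom q (a + b) (a + m) * q ^ triangle m * ↑(x ^ m))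
        + ∑ m ∈ Icc (-(a : ℤ)) (b + 1),
          q ^ b * (qBinom q (a + b) (a + (m - 1)) * q ^ triangle (m - 1) * ↑(x ^ m)) := by
      rw [tripleProductSum, ← sum_add_distrib]
      refine sum_congr rfl fun m hm => ?_
      simp only [mem_Icc] at hm
      have hexp := pow_mul_qBinom_congr q (n := a + b) (k := a + (m - 1))
        (e := b + triangle (m - 1)) (e' := (a + b + 1 - (a + m)).toNat + triangle m) (by
          have := triangle_add_one (m - 1)
          simp only [sub_add_cancel] at this
          omega)
      rw [pow_add, pow_add] at hexp
      rw [← add_assoc, qBinom_succ']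
      push_cast
      rw [show (a : ℤ) + m - 1 = a + (m - 1) by ring]
      linear_combination -↑(x ^ m) * hexp
    _ = tripleProductSum q x a b + q ^ b * (tripleProductSum q x a b * ↑x) := by
      rw [shift, mul_sum, tripleProductSum]
      congr 1 <;> refine (sum_subset (Icc_subset_Icc (by omega) (by omega)) fun m hm hm' => ?_).symm
      all_goals simp only [mem_Icc] at hm hm'
      all_goals rw [qBinom_eq_zero q (by omega)]; simp
    _ = tripleProductSum q x a b * (1 + ↑x * q ^ b) := by ring

theorem tripleProductSum_succ_left (a b : ℕ) :
    tripleProductSum q x (a + 1) b = tripleProductSum q x a b * (1 + ↑x⁻¹ * q ^ (a + 1)) := by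
  have shift : tripleProductSum q x a b * ↑x⁻¹ = ∑ m ∈ Icc (-(a : ℤ) - 1) (b - 1),
      qBinom q (a + b) (a + (m + 1)) * q ^ triangle (m + 1) * ↑(x ^ m) := by
    rw [tripleProductSum]
    simpa [← sub_eq_add_neg] using
      sum_Icc_mul_zpow x (fun m => qBinom q (a + b) (a + m) * q ^ triangle m) _ _ (-1)
  calc tripleProductSum q x (a + 1) b
    _ = (∑ m ∈ Icc (-((a + 1 : ℕ) : ℤ)) b,
          qBinom q (a + b) (a + m) * q ^ triangle m * ↑(x ^ m))
        + ∑ m ∈ Icc (-((a + 1 : ℕ) : ℤ)) b,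
          q ^ (a + 1) * (qBinom q (a + b) (a + (m + 1)) * q ^ triangle (m + 1) * ↑(x ^ m)) := by
      rw [tripleProductSum, ← sum_add_distrib]
      refine sum_congr rfl fun m hm => ?_
      simp only [mem_Icc] at hm
      have hexp := pow_mul_qBinom_congr q (n := a + b) (k := a + (m + 1))
        (e := a + 1 + triangle (m + 1)) (e' := (a + (m + 1)).toNat + triangle m) (by
          have := triangle_add_one m
          omega)
      rw [pow_add, pow_add] at hexp
      rw [Nat.add_right_comm, qBinom_succ]
      push_cast
      rw [show (a : ℤ) + 1 + m - 1 = a + m by ring, show (a : ℤ) + 1 + m = a + (m + 1) by ring]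
      linear_combination -↑(x ^ m) * hexp
    _ = tripleProductSum q x a b + q ^ (a + 1) * (tripleProductSum q x a b * ↑x⁻¹) := by
      rw [shift, mul_sum, tripleProductSum]
      congr 1 <;> refine (sum_subset (Icc_subset_Icc (by omega) (by omega)) fun m hm hm' => ?_).symm
      all_goals simp only [mem_Icc] at hm hm'
      all_goals rw [qBinom_eq_zero q (by omega)]; simp
    _ = tripleProductSum q x a b * (1 + ↑x⁻¹ * q ^ (a + 1)) := by ring

theorem jacobi_triple_product_finite (a b : ℕ) :
    (∏ i ∈ range a, (1 + ↑x⁻¹ * q ^ (i + 1))) * ∏ j ∈ range b, (1 + ↑x * q ^ j)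
      = tripleProductSum q x a b := by
  induction a with
  | zero =>
    induction b with
    | zero => simp [tripleProductSum, qBinom, triangle]
    | succ b ih => rw [prod_range_succ, ← mul_assoc, ih, ← tripleProductSum_succ_right]
  | succ a ih => rw [prod_range_succ, mul_right_comm, ih, ← tripleProductSum_succ_left]

end FiniteJacobiTripleProduct

section PowerSeries

variable {R : Type*} [CommRing R]

theorem coeff_qPochhammer_mul_tripleProductSum (u : Rˣ) {N M : ℕ} (hM : N + 1 ≤ M) :
    coeff N (qPochhammer X M * tripleProductSum X (u.map (C : R →+* R⟦X⟧).toMonoidHom) M M)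
      = ∑ m ∈ Icc (-(N : ℤ) - 1) (N + 1), if triangle m = N then (↑(u ^ m) : R) else 0 := by
  set x := u.map (C : R →+* R⟦X⟧).toMonoidHom
  have hx (m : ℤ) : (↑(x ^ m) : R⟦X⟧) = PowerSeries.C (↑(u ^ m) : R) := by
    rw [← map_zpow, Units.coe_map, RingHom.toMonoidHom_eq_coe, MonoidHom.coe_coe]
  have approx : ∀ m ∈ Icc (-(M : ℤ)) M, X ^ (N + 1) ∣
      qPochhammer X M * (qBinom X (M + M) (M + m) * X ^ triangle m * (↑(x ^ m) : R⟦X⟧))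
        - PowerSeries.C (↑(u ^ m) : R) * X ^ triangle m := by
    intro m hm
    simp only [mem_Icc] at hm
    have h := pow_dvd_qPochhammer_mul_qBinom_add_self_sub_one (X : R⟦X⟧) (m := m) (M := M)
      (by omega)
    have := natAbs_le_triangle_add_one m
    refine (pow_dvd_pow X (show N + 1 ≤ M - m.natAbs + 1 + triangle m by omega)).trans ?_
    rw [pow_add, hx]
    convert mul_dvd_mul h (dvd_mul_left (X ^ triangle m) (PowerSeries.C (↑(u ^ m) : R))) using 1
    ring
  have hcoeff := X_pow_dvd_iff.mp (dvd_sum approx) N (Nat.lt_succ_self N)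
  rw [sum_sub_distrib, map_sub, sub_eq_zero, ← mul_sum, ← tripleProductSum] at hcoeff
  rw [hcoeff, map_sum]
  simp only [coeff_C_mul_X_pow, eq_comm (a := N)]
  refine (sum_subset (Icc_subset_Icc (by omega) (by omega)) fun m _ hm => ?_).symm
  simp only [mem_Icc] at hm
  have := natAbs_le_triangle_add_one m
  rw [if_neg (by omega)]

end PowerSeries

noncomputable def negT {R : Type*} [CommRing R] : (R[T;T⁻¹])ˣ :=
  ⟨-T 1, -T (-1), by rw [neg_mul_neg, ← T_add, add_neg_cancel, T_zero],
    by rw [neg_mul_neg, ← T_add, neg_add_cancel, T_zero]⟩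

theorem val_negT_zpow {R : Type*} [CommRing R] (m : ℤ) :
    ((negT ^ m : (R[T;T⁻¹])ˣ) : R[T;T⁻¹]) = (-1) ^ m.natAbs * T m := by
  induction m using Int.induction_on with
  | zero => simp
  | succ i ih =>
    rw [zpow_add_one, Units.val_mul, ih,
      show ((i : ℤ) + 1).natAbs = (i : ℤ).natAbs + 1 by omega, pow_succ, T_add]
    simp only [negT]
    ring
  | pred i ih =>
    rw [zpow_sub_one, Units.val_mul, ih,
      show (-(i : ℤ) - 1).natAbs = (-(i : ℤ)).natAbs + 1 by omega, pow_succ, sub_eq_add_neg,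
      T_add]
    simp only [negT, Units.inv_mk]
    ring

/-- **Jacobi's triple product identity, formal form**, in the ring
`(ℤ[z,z⁻¹])[[q]]` of formal power series in `q` over the ring of Laurent
polynomials in `z` over `ℤ`.

The infinite product `∏_{n=1}^∞ (1 - q^n)(1 - q^n z⁻¹)(1 - q^(n-1) z)` converges in the
`(q)`-adic topology: the `n`-th factor is `1 + O(q^(n-1))`, so the coefficient of `q^N`
in the partial products stabilizes as soon as at least `N + 1` factors are taken.  We
express the identity by saying that for every `N` and every partial product with
`M ≥ N + 1` factors, the coefficient of `q^N` of the partial product equals the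
coefficient of `q^N` of the left-hand side `∑_{m ∈ ℤ} (-1)^m q^(m(m-1)/2) z^m`, namely
the (finite!) sum of `(-1)^m z^m` over the integers `m` with `m(m-1)/2 = N`; all such
`m` satisfy `-(N+1) ≤ m ≤ N+1`. -/
theorem jacobi_triple_product_formal (N M : ℕ) (hM : N + 1 ≤ M) :
    (PowerSeries.coeff (R := LaurentPolynomial ℤ) N)
      (∏ n ∈ Finset.range M,
        ((1 - (PowerSeries.monomial (R := LaurentPolynomial ℤ) (n + 1)) 1) *
         (1 - (PowerSeries.monomial (R := LaurentPolynomial ℤ) (n + 1)) (T (-1))) *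
         (1 - (PowerSeries.monomial (R := LaurentPolynomial ℤ) n) (T 1)))) =
    ∑ m ∈ Finset.Icc (-(N : ℤ) - 1) ((N : ℤ) + 1),
      if m * (m - 1) / 2 = N then ((-1) ^ m.natAbs : LaurentPolynomial ℤ) * T m else 0 := by
  have hprod : ∏ n ∈ range M,
        ((1 - (PowerSeries.monomial (R := LaurentPolynomial ℤ) (n + 1)) 1) *
         (1 - (PowerSeries.monomial (R := LaurentPolynomial ℤ) (n + 1)) (T (-1))) *
         (1 - (PowerSeries.monomial (R := LaurentPolynomial ℤ) n) (T 1)))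
      = qPochhammer X M
        * tripleProductSum X (negT.map (C : _ →+* ℤ[T;T⁻¹]⟦X⟧).toMonoidHom) M M := by
    rw [← jacobi_triple_product_finite, qPochhammer, ← prod_mul_distrib, ← prod_mul_distrib]
    refine prod_congr rfl fun n _ => ?_
    simp [monomial_eq_C_mul_X_pow, negT]
    ring
  rw [hprod, coeff_qPochhammer_mul_tripleProductSum _ hM]
  refine sum_congr rfl fun m _ => ?_
  simp only [val_negT_zpow, ← natCast_triangle, Nat.cast_inj]
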